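/- Let F be a field and let 0 → N → M → Q → 0 be a short exact sequence of precosheaves of F-vector spaces on Y (exact at each open set), where Q = i_y(V) is a skyscraper at y ∈ Y with V finite-dimensional, and where N(U) is finite-dimensional for every open U. If Y has a countable neighborhood basis at y, then the sequence splits: there is a morphism of precosheaves s : Q → M with the projection M → Q composed with s equal to the identity. -/
import Mathlib


open TopologicalSpace DirectSum

/-- A precosheaf of `R`-modules on a topological space `Y`: a covariant functor from the
poset of open subsets of `Y` to `R`-modules. -/
structure Precosheaf (Y : Type) [TopologicalSpace Y] (R : Type) [Ring R] where
  obj : Opens Y → Type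
  addCommGroup : ∀ U, AddCommGroup (obj U)
  module : ∀ U, Module R (obj U)
  map : ∀ {U V : Opens Y}, U ≤ V → (obj U →ₗ[R] obj V)
  map_id : ∀ U : Opens Y, map (le_refl U) = LinearMap.id
  map_comp : ∀ {U V W : Opens Y} (h₁ : U ≤ V) (h₂ : V ≤ W),
    (map h₂).comp (map h₁) = map (h₁.trans h₂)

attribute [instance] Precosheaf.addCommGroup Precosheaf.module

variable {Y : Type} [TopologicalSpace Y] {R : Type} [Ring R]

/-- A precosheaf is flabby if all structure maps are injective. -/
def Precosheaf.Flabby (M : Precosheaf Y R) : Prop :=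
  ∀ {U V : Opens Y} (h : U ≤ V), Function.Injective (M.map h)

/-- The map `⨁_i M(V_i) → M(W)` given by the structure maps `i_{V_i}^W`. -/
noncomputable def Precosheaf.coverSum (M : Precosheaf Y R) {ι : Type} [DecidableEq ι]
    (V : ι → Opens Y) (W : Opens Y) (h : ∀ i, V i ≤ W) :
    (⨁ (i : ι), M.obj (V i)) →ₗ[R] M.obj W :=
  DirectSum.toModule R ι _ (fun i => M.map (h i))

/-- The map `⨁_{j,k} M(V_j ∩ V_k) → ⨁_i M(V_i)` given on the `(j,k)` summand by
`i^{V_j} - i^{V_k}`. -/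
noncomputable def Precosheaf.coverDiff (M : Precosheaf Y R) {ι : Type} [DecidableEq ι]
    (V : ι → Opens Y) :
    (⨁ (p : ι × ι), M.obj (V p.1 ⊓ V p.2)) →ₗ[R] ⨁ (i : ι), M.obj (V i) :=
  DirectSum.toModule R (ι × ι) _ (fun p =>
    (DirectSum.lof R ι (fun i => M.obj (V i)) p.1).comp (M.map inf_le_left)
      - (DirectSum.lof R ι (fun i => M.obj (V i)) p.2).comp (M.map inf_le_right))

/-- The cosheaf axiom: for every open cover `(V_i)` of an open set `W`, the sequence
`⨁_{j,k} M(V_j ∩ V_k) → ⨁_i M(V_i) → M(W) → 0` is exact. -/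
def Precosheaf.IsCosheaf (M : Precosheaf Y R) : Prop :=
  ∀ (ι : Type) [DecidableEq ι] (V : ι → Opens Y) (W : Opens Y)
    (h : ∀ i, V i ≤ W), W = (⨆ i, V i) →
    Function.Surjective (M.coverSum V W h) ∧
    LinearMap.range (M.coverDiff V) = LinearMap.ker (M.coverSum V W h)

/-- The value submodule of the skyscraper precosheaf: all of `G` if `x ∈ U`, zero otherwise. -/
def skyMod (x : Y) (G : Type) [AddCommGroup G] [Module R G] (U : Opens Y) :
    Submodule R G where
  carrier := {g | x ∈ U ∨ g = 0}
  add_mem' := by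
    rintro a b (ha | ha) (hb | hb)
    · exact Or.inl ha
    · exact Or.inl ha
    · exact Or.inl hb
    · exact Or.inr (by rw [ha, hb, add_zero])
  zero_mem' := Or.inr rfl
  smul_mem' := by
    rintro c a (ha | ha)
    · exact Or.inl ha
    · exact Or.inr (by rw [ha, smul_zero])

lemma skyMod_mono (x : Y) (G : Type) [AddCommGroup G] [Module R G] {U V : Opens Y}
    (h : U ≤ V) : skyMod (R := R) x G U ≤ skyMod x G V := by
  rintro g (hg | hg)
  · exact Or.inl (h hg)
  · exact Or.inr hg

/-- The skyscraper precosheaf `i_x(G)`: it assigns `G` to opens containing `x` and `0`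
otherwise, with identity or zero structure maps accordingly. -/
def skyscraper (x : Y) (G : Type) [AddCommGroup G] [Module R G] : Precosheaf Y R where
  obj U := skyMod (R := R) x G U
  addCommGroup U := inferInstance
  module U := inferInstance
  map h := Submodule.inclusion (skyMod_mono x G h)
  map_id U := by ext g; rfl
  map_comp h₁ h₂ := by ext g; rfl

/-- A morphism of precosheaves: a natural transformation. -/
structure PrecosheafHom (M N : Precosheaf Y R) where
  app : ∀ U : Opens Y, M.obj U →ₗ[R] N.obj U
  naturality : ∀ {U V : Opens Y} (h : U ≤ V), (app V).comp (M.map h) = (N.map h).comp (app U)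

section ML

open Module

variable {F : Type} [Field F] {A : ℕ → Type}
  [∀ n, AddCommGroup (A n)] [∀ n, Module F (A n)]
  {B : Type} [AddCommGroup B] [Module F B]

private def castA {j k : ℕ} (h : j = k) : A j →ₗ[F] A k := by subst h; exact LinearMap.id

private lemma castA_rfl {j : ℕ} (h : j = j) :
    (castA (A := A) (F := F) h) = LinearMap.id := rfl

private noncomputable def gchain (g : ∀ n, A (n+1) →ₗ[F] A n) : ∀ (n k : ℕ), A k →ₗ[F] A n
  | n, 0 => if h : 0 = n then castA h else 0
  | n, k+1 => if h : k+1 = n then castA h else (gchain g n k).comp (g k)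

private lemma gchain_self (g : ∀ n, A (n+1) →ₗ[F] A n) (n : ℕ) :
    gchain g n n = LinearMap.id := by
  cases n with
  | zero => rw [gchain, dif_pos rfl, castA_rfl]
  | succ k => rw [gchain, dif_pos rfl, castA_rfl]

private lemma gchain_succ (g : ∀ n, A (n+1) →ₗ[F] A n) {n k : ℕ} (h : n ≤ k) :
    gchain g n (k+1) = (gchain g n k).comp (g k) := by
  rw [gchain, dif_neg (by omega)]

private lemma gchain_comp (g : ∀ n, A (n+1) →ₗ[F] A n) {n m k : ℕ} (h1 : n ≤ m) (h2 : m ≤ k) :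
    (gchain g n m).comp (gchain g m k) = gchain g n k := by
  induction k with
  | zero =>
    have hm : m = 0 := by omega
    subst hm
    have hn : n = 0 := by omega
    subst hn
    simp [gchain_self]
  | succ k ih =>
    rcases Nat.eq_or_lt_of_le h2 with he | hl
    · subst he
      rw [gchain_self]
      simp
    · have hm : m ≤ k := by omega
      rw [gchain_succ g hm, gchain_succ g (h1.trans hm), ← LinearMap.comp_assoc, ih hm]

private lemma gchain_peel (g : ∀ n, A (n+1) →ₗ[F] A n) {n k : ℕ} (h : n < k) :
    gchain g n k = (g n).comp (gchain g (n+1) k) := by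
  induction k with
  | zero => omega
  | succ k ih =>
    rcases Nat.lt_succ_iff_lt_or_eq.mp h with hl | he
    · rw [gchain_succ g (by omega), ih hl, gchain_succ g (by omega), LinearMap.comp_assoc]
    · subst he
      rw [gchain_succ g le_rfl, gchain_self, gchain_self]
      simp

private theorem ml_exists (g : ∀ n, A (n+1) →ₗ[F] A n) (φ : ∀ n, A n →ₗ[F] B)
    (hcompat : ∀ n, (φ n).comp (g n) = φ (n+1))
    (hfd : ∀ n, FiniteDimensional F (LinearMap.ker (φ n)))
    (b : B) (hex : ∀ n, ∃ a, φ n a = b) :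
    ∃ a : ∀ n, A n, (∀ n, φ n (a n) = b) ∧ ∀ n, g n (a (n+1)) = a n := by
  classical
  -- φ through chains
  have hφg : ∀ n k, n ≤ k → (φ n).comp (gchain g n k) = φ k := by
    intro n k
    induction k with
    | zero =>
      intro h
      have h0 : n = 0 := Nat.le_zero.mp h
      subst h0
      simp [gchain_self]
    | succ k ih =>
      intro h
      rcases Nat.eq_or_lt_of_le h with he | hl
      · subst he; simp [gchain_self]
      · have hnk : n ≤ k := by omega
        rw [gchain_succ g hnk, ← LinearMap.comp_assoc, ih hnk, hcompat]
  have hφg' : ∀ n k (h : n ≤ k) (x : A k), φ n (gchain g n k x) = φ k x := by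
    intro n k h x
    exact LinearMap.congr_fun (hφg n k h) x
  -- the submodules J n k
  set J : ℕ → ℕ → Submodule F (A 0) := fun _ _ => ⊥ with hJdef
  clear hJdef J
  have hJker : ∀ n k, n ≤ k →
      Submodule.map (gchain g n k) (LinearMap.ker (φ k)) ≤ LinearMap.ker (φ n) := by
    rintro n k h x ⟨w, hw, rfl⟩
    simpa [LinearMap.mem_ker, hφg' n k h w] using hw
  have hJmono : ∀ n k l, n ≤ k → k ≤ l →
      Submodule.map (gchain g n l) (LinearMap.ker (φ l)) ≤
        Submodule.map (gchain g n k) (LinearMap.ker (φ k)) := by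
    rintro n k l hnk hkl x ⟨w, hw, rfl⟩
    refine ⟨gchain g k l w, ?_, ?_⟩
    · simpa [LinearMap.mem_ker, hφg' k l hkl w] using hw
    · rw [← LinearMap.comp_apply, gchain_comp g hnk hkl]
  have hJfd : ∀ n k, n ≤ k →
      FiniteDimensional F (Submodule.map (gchain g n k) (LinearMap.ker (φ k))) := by
    intro n k h
    haveI := hfd n
    exact Submodule.finiteDimensional_of_le (hJker n k h)
  -- stabilization
  have hstab : ∀ n, ∃ k1, n ≤ k1 ∧ ∀ k, k1 ≤ k →
      Submodule.map (gchain g n k) (LinearMap.ker (φ k)) =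
        Submodule.map (gchain g n k1) (LinearMap.ker (φ k1)) := by
    intro n
    haveI := hfd n
    set r : ℕ → ℕ := fun k =>
      finrank F (Submodule.map (gchain g n k) (LinearMap.ker (φ k))) with hr
    obtain ⟨m0, hm0⟩ : ∃ m0, r (n + m0) = sInf (Set.range fun m => r (n + m)) :=
      Nat.sInf_mem (Set.range_nonempty _)
    refine ⟨n + m0, by omega, ?_⟩
    intro k hk
    have hnk : n ≤ k := by omega
    have hle := hJmono n (n + m0) k (by omega) hk
    haveI := hJfd n (n + m0) (by omega)
    refine Submodule.eq_of_le_of_finrank_le hle ?_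
    have h1 : r (n + m0) ≤ r k := by
      rw [hm0]
      have h2 : r (n + (k - n)) ∈ Set.range fun m => r (n + m) := ⟨k - n, rfl⟩
      have h3 := Nat.sInf_le h2
      rwa [show n + (k - n) = k by omega] at h3
    exact h1
  choose k1 hk1n hk1s using hstab
  -- the eventual kernels
  set Nst : ∀ n, Submodule F (A n) := fun n =>
    Submodule.map (gchain g n (k1 n)) (LinearMap.ker (φ (k1 n))) with hNst
  have hNker : ∀ n, Nst n ≤ LinearMap.ker (φ n) := fun n => hJker n (k1 n) (hk1n n)
  have hNsurj : ∀ n x, x ∈ Nst n → ∃ z ∈ Nst (n+1), g n z = x := by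
    intro n x hx
    set k := max (k1 n) (k1 (n+1)) with hk
    have hxk : x ∈ Submodule.map (gchain g n k) (LinearMap.ker (φ k)) := by
      rw [hk1s n k (le_max_left _ _)]; exact hx
    obtain ⟨w, hw, rfl⟩ := hxk
    have hA : k1 (n+1) ≤ k := hk ▸ le_max_right _ _
    have hnk : n < k := by have := hk1n (n+1); omega
    refine ⟨gchain g (n+1) k w, ?_, ?_⟩
    · have hmem : gchain g (n+1) k w ∈
          Submodule.map (gchain g (n+1) k) (LinearMap.ker (φ k)) := ⟨w, hw, rfl⟩
      rw [hk1s (n+1) k hA] at hmem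
      exact hmem
    · rw [← LinearMap.comp_apply, ← gchain_peel g hnk]
  -- global choice of sections
  choose s hs using hex
  have hTne : ∀ n, φ n (gchain g n (k1 n) (s (k1 n))) = b := fun n => by
    rw [hφg' n (k1 n) (hk1n n), hs]
  have htd : ∀ n k, k1 n ≤ k →
      gchain g n k (s k) - gchain g n (k1 n) (s (k1 n)) ∈ Nst n := by
    intro n k hk
    have h2 : gchain g n k (s k) = gchain g n (k1 n) (gchain g (k1 n) k (s k)) := by
      rw [← LinearMap.comp_apply, gchain_comp g (hk1n n) hk]
    refine ⟨gchain g (k1 n) k (s k) - s (k1 n), ?_, ?_⟩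
    · simp only [SetLike.mem_coe, LinearMap.mem_ker, map_sub, hφg' (k1 n) k hk, hs, sub_self]
    · rw [map_sub, ← h2]
  have hstep : ∀ n (x : A n), φ n x = b → x - gchain g n (k1 n) (s (k1 n)) ∈ Nst n →
      ∃ z : A (n+1), (φ (n+1) z = b ∧
        z - gchain g (n+1) (k1 (n+1)) (s (k1 (n+1))) ∈ Nst (n+1)) ∧ g n z = x := by
    intro n x hxb hxm
    set k := max (k1 n) (k1 (n+1)) with hk
    have hA : k1 (n+1) ≤ k := hk ▸ le_max_right _ _
    have hB : k1 n ≤ k := hk ▸ le_max_left _ _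
    have hA' : n + 1 ≤ k := le_trans (hk1n (n+1)) hA
    have hnk : n < k := by omega
    have hv' : x - gchain g n k (s k) ∈ Nst n := by
      have h3 := sub_mem hxm (htd n k hB)
      simpa [sub_sub_sub_cancel_right] using h3
    obtain ⟨w, hw, hgw⟩ := hNsurj n _ hv'
    refine ⟨gchain g (n+1) k (s k) + w, ⟨?_, ?_⟩, ?_⟩
    · rw [map_add, hφg' (n+1) k hA', hs, LinearMap.mem_ker.mp (hNker (n+1) hw), add_zero]
    · have h5 : gchain g (n+1) k (s k) + w - gchain g (n+1) (k1 (n+1)) (s (k1 (n+1)))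
          = (gchain g (n+1) k (s k) - gchain g (n+1) (k1 (n+1)) (s (k1 (n+1)))) + w := by
        abel
      rw [h5]
      exact add_mem (htd (n+1) k hA) hw
    · rw [map_add, hgw, ← LinearMap.comp_apply (g n), ← gchain_peel g hnk]
      abel
  let T : ∀ n, Type := fun n =>
    {x : A n // φ n x = b ∧ x - gchain g n (k1 n) (s (k1 n)) ∈ Nst n}
  let seq : ∀ n, T n := fun n => Nat.rec
    ⟨gchain g 0 (k1 0) (s (k1 0)), hTne 0, by rw [sub_self]; exact zero_mem _⟩
    (fun n p => ⟨(hstep n p.1 p.2.1 p.2.2).choose, (hstep n p.1 p.2.1 p.2.2).choose_spec.1⟩) n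
  refine ⟨fun n => (seq n).1, fun n => (seq n).2.1, fun n => ?_⟩
  exact (hstep n (seq n).1 (seq n).2.1 (seq n).2.2).choose_spec.2

end ML

private def seqInf {Y : Type} [TopologicalSpace Y] (bb : ℕ → Opens Y) : ℕ → Opens Y
  | 0 => bb 0
  | n+1 => seqInf bb n ⊓ bb (n+1)

/-- A short exact sequence of precosheaves of vector spaces `0 → N → M → i_y(V) → 0`
(with `N(U) = ker(M(U) → Q(U))` finite-dimensional for every open `U`, and `V`
finite-dimensional) splits, provided `Y` has a countable neighborhood basis at `y`. -/
theorem stmt_16 (F : Type) [Field F] {Y' : Type} [TopologicalSpace Y']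
    (y : Y') (V : Type) [AddCommGroup V] [Module F V] [FiniteDimensional F V]
    (M : Precosheaf Y' F) (π : PrecosheafHom M (skyscraper (R := F) y V))
    (hsurj : ∀ U : Opens Y', Function.Surjective (π.app U))
    (hker : ∀ U : Opens Y', FiniteDimensional F (LinearMap.ker (π.app U)))
    (hbasis : ∃ b : ℕ → Opens Y', (∀ n, y ∈ b n) ∧
      ∀ U : Opens Y', y ∈ U → ∃ n, b n ≤ U) :
    ∃ s : PrecosheafHom (skyscraper (R := F) y V) M,
      ∀ U : Opens Y', (π.app U).comp (s.app U) = LinearMap.id := by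
  classical
  obtain ⟨bb, hby, hbU⟩ := hbasis
  -- a decreasing countable basis at y
  let C : ℕ → Opens Y' := seqInf bb
  have hCy : ∀ n, y ∈ C n := by
    intro n
    induction n with
    | zero => exact hby 0
    | succ n ih => exact Set.mem_inter ih (hby (n+1))
  have hCmono : ∀ {n m : ℕ}, n ≤ m → C m ≤ C n := by
    intro n m h
    induction h with
    | refl => exact le_rfl
    | step _ ih => exact le_trans inf_le_left ih
  have hCb : ∀ n, C n ≤ bb n := by
    intro n
    cases n with
    | zero => exact le_rfl
    | succ n => exact inf_le_right
  have hCU : ∀ U : Opens Y', y ∈ U → ∃ n, C n ≤ U := by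
    intro U hU
    obtain ⟨n, hn⟩ := hbU U hU
    exact ⟨n, (hCb n).trans hn⟩
  -- the tower of Hom-spaces
  let φn : ∀ n, (V →ₗ[F] M.obj (C n)) →ₗ[F] (V →ₗ[F] V) := fun n =>
    LinearMap.llcomp F V (M.obj (C n)) V
      ((skyMod (R := F) y V (C n)).subtype.comp (π.app (C n)))
  let gg : ∀ n, (V →ₗ[F] M.obj (C (n+1))) →ₗ[F] (V →ₗ[F] M.obj (C n)) := fun n =>
    LinearMap.llcomp F V (M.obj (C (n+1))) (M.obj (C n)) (M.map (hCmono (Nat.le_succ n)))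
  have hcompat : ∀ n, (φn n).comp (gg n) = φn (n+1) := by
    intro n
    apply LinearMap.ext; intro a
    apply LinearMap.ext; intro v
    have hnat := LinearMap.congr_fun (π.naturality (hCmono (Nat.le_succ n))) (a v)
    simp only [LinearMap.comp_apply] at hnat
    simp only [φn, gg, LinearMap.comp_apply, LinearMap.llcomp_apply, Submodule.coe_subtype,
      Submodule.subtype_apply]
    exact congrArg Subtype.val hnat
  have hfd : ∀ n, FiniteDimensional F (LinearMap.ker (φn n)) := by
    intro n
    haveI := hker (C n)
    have hmem : ∀ (a : LinearMap.ker (φn n)) (v : V),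
        (a : V →ₗ[F] M.obj (C n)) v ∈ LinearMap.ker (π.app (C n)) := by
      intro a v
      have h0 : φn n (a : V →ₗ[F] M.obj (C n)) = 0 := a.2
      have h1 := LinearMap.congr_fun h0 v
      simp only [φn, LinearMap.llcomp_apply, LinearMap.comp_apply, Submodule.subtype_apply,
        LinearMap.zero_apply] at h1
      exact LinearMap.mem_ker.mpr (Subtype.ext h1)
    let emb : LinearMap.ker (φn n) →ₗ[F] (V →ₗ[F] LinearMap.ker (π.app (C n))) :=
      { toFun := fun a => LinearMap.codRestrict _ (a : V →ₗ[F] M.obj (C n)) (hmem a)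
        map_add' := fun a b => by
          apply LinearMap.ext; intro v
          apply Subtype.ext
          rfl
        map_smul' := fun c a => by
          apply LinearMap.ext; intro v
          apply Subtype.ext
          rfl }
    have hinj : Function.Injective emb := by
      intro a b hab
      apply Subtype.ext
      apply LinearMap.ext; intro v
      exact congrArg Subtype.val (LinearMap.congr_fun hab v)
    exact FiniteDimensional.of_injective emb hinj
  have hex : ∀ n, ∃ a, φn n a = LinearMap.id := by
    intro n
    have hfs : Function.Surjective ((skyMod (R := F) y V (C n)).subtype.comp (π.app (C n))) := by
      intro v
      obtain ⟨m, hm⟩ := hsurj (C n) ⟨v, Or.inl (hCy n)⟩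
      refine ⟨m, ?_⟩
      show (skyMod (R := F) y V (C n)).subtype ((π.app (C n)) m) = v
      rw [hm]
      rfl
    obtain ⟨a, ha⟩ := LinearMap.exists_rightInverse_of_surjective
      ((skyMod (R := F) y V (C n)).subtype.comp (π.app (C n)))
      (LinearMap.range_eq_top.mpr hfs)
    exact ⟨a, ha⟩
  obtain ⟨σ, hσb, hσg⟩ := ml_exists (A := fun n => V →ₗ[F] M.obj (C n)) gg φn hcompat hfd
    LinearMap.id hex
  have hσcomp : ∀ n, (M.map (hCmono (Nat.le_succ n))).comp (σ (n+1)) = σ n := fun n => hσg n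
  have hσanti : ∀ (n m : ℕ) (h : n ≤ m), (M.map (hCmono h)).comp (σ m) = σ n := by
    intro n m h
    induction h with
    | refl =>
      have h1 : M.map (hCmono (Nat.le.refl : n ≤ n)) = LinearMap.id := M.map_id (C n)
      rw [h1, LinearMap.id_comp]
    | @step m h2 ih =>
      have hcomp : (M.map (hCmono h2)).comp (M.map (hCmono (Nat.le_succ m)))
          = M.map ((hCmono (Nat.le_succ m)).trans (hCmono h2)) := M.map_comp _ _
      calc (M.map (hCmono (Nat.le_succ_of_le h2))).comp (σ (m+1))
          = (M.map (hCmono h2)).comp ((M.map (hCmono (Nat.le_succ m))).comp (σ (m+1))) := by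
            rw [← LinearMap.comp_assoc, hcomp]
        _ = (M.map (hCmono h2)).comp (σ m) := by rw [hσcomp m]
        _ = σ n := ih
  have hwd : ∀ (U : Opens Y') (n m : ℕ) (hn : C n ≤ U) (hm : C m ≤ U),
      (M.map hn).comp (σ n) = (M.map hm).comp (σ m) := by
    have key : ∀ (U : Opens Y') (n l : ℕ) (h : n ≤ l) (hn : C n ≤ U),
        (M.map hn).comp (σ n) = (M.map ((hCmono h).trans hn)).comp (σ l) := by
      intro U n l h hn
      rw [← hσanti n l h, ← LinearMap.comp_assoc, M.map_comp]
    intro U n m hn hm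
    rw [key U n (max n m) (le_max_left _ _) hn, key U m (max n m) (le_max_right _ _) hm]
  choose nU hnU using hCU
  let sapp : ∀ U : Opens Y', (skyscraper (R := F) y V).obj U →ₗ[F] M.obj U := fun U =>
    if h : y ∈ U then
      ((M.map (hnU U h)).comp (σ (nU U h))).comp (skyMod (R := F) y V U).subtype
    else 0
  have hzero : ∀ (U : Opens Y') (_ : y ∉ U) (x : (skyscraper (R := F) y V).obj U), x = 0 := by
    intro U hU x
    rcases (x.2 : y ∈ U ∨ x.1 = 0) with h | h
    · exact absurd h hU
    · exact Subtype.ext h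
  refine ⟨⟨sapp, ?_⟩, ?_⟩
  · intro U U' h
    by_cases hU : y ∈ U
    · have hU' : y ∈ U' := h hU
      apply LinearMap.ext; intro x
      simp only [sapp, dif_pos hU, dif_pos hU', LinearMap.comp_apply]
      have hw := LinearMap.congr_fun
        (hwd U' (nU U' hU') (nU U hU) (hnU U' hU') ((hnU U hU).trans h))
        ((skyMod (R := F) y V U).subtype x)
      simp only [LinearMap.comp_apply] at hw
      have hcomp := LinearMap.congr_fun (M.map_comp (hnU U hU) h)
        ((σ (nU U hU)) ((skyMod (R := F) y V U).subtype x))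
      simp only [LinearMap.comp_apply] at hcomp
      exact hw.trans hcomp.symm
    · apply LinearMap.ext; intro x
      have hx0 : x = 0 := hzero U hU x
      rw [hx0]
      simp only [map_zero]
  · intro U
    by_cases hU : y ∈ U
    · apply LinearMap.ext; intro x
      simp only [sapp, dif_pos hU, LinearMap.comp_apply, LinearMap.id_apply]
      have hnat := LinearMap.congr_fun (π.naturality (hnU U hU))
        ((σ (nU U hU)) ((skyMod (R := F) y V U).subtype x))
      simp only [LinearMap.comp_apply] at hnat
      have hb := LinearMap.congr_fun (hσb (nU U hU)) ((skyMod (R := F) y V U).subtype x)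
      apply Subtype.ext
      exact (congrArg Subtype.val hnat).trans hb
    · apply LinearMap.ext; intro x
      have hx0 : x = 0 := hzero U hU x
      rw [hx0]
      simp only [map_zero, LinearMap.id_apply]
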